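/- Let 𝔞 > -1, ℓ ∈ ℕ_0, and F_{2ℓ}(x) = Σ_{p=0}^{2ℓ} L_p^{2𝔞}(x). Then ∫_0^∞ e^{-w/2} w^{𝔞} γ(𝔞+1, w/2) F_{2ℓ}(w) dw = 2^{𝔞} C(ℓ+𝔞, ℓ) Γ(𝔞+1)², where γ(c, y) = ∫_0^y e^{-x} x^{c-1} dx is the lower incomplete gamma function and C(ℓ+𝔞, ℓ) = Γ(ℓ+𝔞+1)/(ℓ! Γ(𝔞+1)). -/

import Mathlib

open Filter Real MeasureTheory

/-- Generalized binomial coefficient `C(x, m) = x(x-1)⋯(x-m+1)/m!` for `m ∈ ℕ₀`, `0` for `m < 0`. -/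
noncomputable def gchoose (x : ℝ) (m : ℤ) : ℝ :=
  if 0 ≤ m then (∏ i ∈ Finset.range m.toNat, (x - (i : ℝ))) / (Nat.factorial m.toNat : ℝ) else 0

/-- Generalized Laguerre polynomial `L_j^α(x) = Σ_{ℓ=0}^j ((-1)^ℓ/ℓ!) C(j+α, j-ℓ) x^ℓ`. -/
noncomputable def lagL (j : ℕ) (α : ℝ) : ℝ → ℝ :=
  fun x => ∑ l ∈ Finset.range (j + 1),
    ((-1 : ℝ) ^ l / (Nat.factorial l : ℝ)) * gchoose ((j : ℝ) + α) ((j : ℤ) - l) * x ^ l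

open Set Topology

lemma gchoose_of_neg {x : ℝ} {m : ℤ} (h : m < 0) : gchoose x m = 0 := by
  simp [gchoose, not_le.mpr h]

lemma gchoose_natCast (x : ℝ) (k : ℕ) :
    gchoose x (k : ℤ) = (∏ i ∈ Finset.range k, (x - i)) / (Nat.factorial k : ℝ) := by
  simp [gchoose]

lemma gchoose_zero (x : ℝ) : gchoose x 0 = 1 := by
  simp [gchoose]

lemma gchoose_L1' (x : ℝ) (m : ℤ) :
    ((m : ℝ) + 1) * gchoose x (m + 1) = (x - m) * gchoose x m := by
  rcases lt_trichotomy m (-1) with h | h | h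
  · rw [gchoose_of_neg (by omega), gchoose_of_neg (by omega)]; ring
  · subst h
    rw [gchoose_of_neg (show (-1:ℤ) < 0 by norm_num)]
    push_cast; ring
  · have hm : 0 ≤ m := by omega
    lift m to ℕ using hm
    have : (m : ℤ) + 1 = ((m + 1 : ℕ) : ℤ) := by push_cast; ring
    rw [this, gchoose_natCast, gchoose_natCast, Finset.prod_range_succ,
      Nat.factorial_succ]
    have h1 : (Nat.factorial m : ℝ) ≠ 0 := by positivity
    have h2 : ((m : ℝ) + 1) ≠ 0 := by positivity
    push_cast
    field_simp

lemma gchoose_L1 (x : ℝ) (m : ℤ) :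
    x * gchoose (x - 1) (m - 1) = (m : ℝ) * gchoose x m := by
  rcases lt_trichotomy m 0 with h | h | h
  · rw [gchoose_of_neg (by omega), gchoose_of_neg h]; ring
  · subst h; rw [gchoose_of_neg (by omega)]; norm_num
  · obtain ⟨k, rfl⟩ : ∃ k : ℕ, m = (k : ℤ) + 1 := ⟨(m - 1).toNat, by omega⟩
    have h1 : (k : ℤ) + 1 - 1 = (k : ℤ) := by ring
    have h2 : (k : ℤ) + 1 = ((k + 1 : ℕ) : ℤ) := by push_cast; ring
    rw [h1, h2, gchoose_natCast, gchoose_natCast, Finset.prod_range_succ',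
      Nat.factorial_succ]
    have h3 : (Nat.factorial k : ℝ) ≠ 0 := by positivity
    have h4 : ((k : ℝ) + 1) ≠ 0 := by positivity
    push_cast
    have : ∀ i ∈ Finset.range k, x - (↑i + 1) = (x - 1) - i := by intros; ring
    rw [Finset.prod_congr rfl this]
    field_simp
    ring

lemma gchoose_pascal (x : ℝ) (m : ℤ) :
    gchoose (x + 1) (m + 1) = gchoose x (m + 1) + gchoose x m := by
  rcases lt_trichotomy m (-1) with h | h | h
  · rw [gchoose_of_neg (by omega), gchoose_of_neg (by omega), gchoose_of_neg (by omega)]; ring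
  · subst h
    have h0 : (-1 : ℤ) + 1 = 0 := by norm_num
    rw [h0, gchoose_zero, gchoose_zero, gchoose_of_neg (show (-1:ℤ) < 0 by norm_num)]
    ring
  · have hm : 0 ≤ m := by omega
    lift m to ℕ using hm
    have h2 : (m : ℤ) + 1 = ((m + 1 : ℕ) : ℤ) := by push_cast; ring
    rw [h2, gchoose_natCast, gchoose_natCast, gchoose_natCast]
    have e1 : ∏ i ∈ Finset.range (m + 1), (x + 1 - i) = (∏ i ∈ Finset.range m, (x - i)) * (x + 1) := by
      rw [Finset.prod_range_succ']
      congr 1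
      · exact Finset.prod_congr rfl (by intros; push_cast; ring)
      · norm_num
    have e2 : ∏ i ∈ Finset.range (m + 1), (x - i) = (∏ i ∈ Finset.range m, (x - i)) * (x - m) := by
      rw [Finset.prod_range_succ]
    rw [e1, e2, Nat.factorial_succ]
    have h3 : (Nat.factorial m : ℝ) ≠ 0 := by positivity
    have h4 : ((m : ℝ) + 1) ≠ 0 := by positivity
    push_cast
    field_simp
    ring

lemma gchoose_vandermonde (x y : ℝ) (p : ℕ) :
    ∑ k ∈ Finset.range (p + 1), gchoose x k * gchoose y ((p : ℤ) - k) = gchoose (x + y) p := by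
  induction p with
  | zero => simp [gchoose_zero]
  | succ p ih =>
    have key : ((p : ℝ) + 1) * ∑ k ∈ Finset.range (p + 2), gchoose x k * gchoose y ((p : ℤ) + 1 - k)
        = (x + y - p) * ∑ k ∈ Finset.range (p + 1), gchoose x k * gchoose y ((p : ℤ) - k) := by
      rw [Finset.mul_sum]
      have split : ∀ k ∈ Finset.range (p + 2),
          ((p : ℝ) + 1) * (gchoose x k * gchoose y ((p : ℤ) + 1 - k))
          = ((k : ℝ) * gchoose x k) * gchoose y ((p : ℤ) + 1 - k)
            + gchoose x k * ((((p : ℝ) - k) + 1) * gchoose y (((p : ℤ) - k) + 1)) := by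
        intro k _
        have : ((p : ℤ) + 1 - k) = ((p : ℤ) - k) + 1 := by ring
        rw [this]; ring
      rw [Finset.sum_congr rfl split, Finset.sum_add_distrib]
      have T1 : ∑ k ∈ Finset.range (p + 2), ((k : ℝ) * gchoose x k) * gchoose y ((p : ℤ) + 1 - k)
          = ∑ k ∈ Finset.range (p + 1), ((x - k) * gchoose x k) * gchoose y ((p : ℤ) - k) := by
        rw [Finset.sum_range_succ']
        have h0 : ((0 : ℕ) : ℝ) * gchoose x ((0 : ℕ) : ℤ) * gchoose y ((p : ℤ) + 1 - ((0 : ℕ) : ℤ)) = 0 := by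
          simp
        rw [h0, add_zero]
        refine Finset.sum_congr rfl fun k _ => ?_
        have e1 : ((k + 1 : ℕ) : ℝ) * gchoose x ((k + 1 : ℕ) : ℤ) = (x - k) * gchoose x k := by
          have := gchoose_L1' x (k : ℤ)
          push_cast at this ⊢
          linarith [this]
        have e2 : ((p : ℤ) + 1 - ((k + 1 : ℕ) : ℤ)) = (p : ℤ) - k := by push_cast; ring
        rw [e1, e2]
      have T2 : ∑ k ∈ Finset.range (p + 2), gchoose x k * ((((p : ℝ) - k) + 1) * gchoose y (((p : ℤ) - k) + 1))
          = ∑ k ∈ Finset.range (p + 1), gchoose x k * ((y - ((p : ℝ) - k)) * gchoose y ((p : ℤ) - k)) := by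
        rw [Finset.sum_range_succ]
        have hlast : gchoose x (((p + 1 : ℕ)) : ℤ) * ((((p : ℝ) - ((p + 1 : ℕ) : ℝ)) + 1) * gchoose y (((p : ℤ) - ((p + 1 : ℕ) : ℤ)) + 1)) = 0 := by
          have hz : ((p : ℝ) - ((p + 1 : ℕ) : ℝ)) + 1 = 0 := by push_cast; ring
          rw [hz]; ring
        rw [hlast, add_zero]
        refine Finset.sum_congr rfl fun k hk => ?_
        congr 1
        have := gchoose_L1' y ((p : ℤ) - k)
        push_cast at this ⊢
        linarith [this]
      rw [T1, T2, ← Finset.sum_add_distrib, Finset.mul_sum]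
      refine Finset.sum_congr rfl fun k _ => ?_
      ring
    have hc : (((p + 1 : ℕ)) : ℤ) = (p : ℤ) + 1 := by push_cast; ring
    have hc2 : ∀ k : ℕ, (((p + 1 : ℕ)) : ℤ) - k = (p : ℤ) + 1 - k := by intro k; omega
    have hne : ((p : ℝ) + 1) ≠ 0 := by positivity
    apply mul_left_cancel₀ hne
    calc ((p : ℝ) + 1) * ∑ k ∈ Finset.range (p + 1 + 1), gchoose x k * gchoose y (((p + 1 : ℕ) : ℤ) - k)
        = ((p : ℝ) + 1) * ∑ k ∈ Finset.range (p + 2), gchoose x k * gchoose y ((p : ℤ) + 1 - k) := by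
          congr 1
      _ = (x + y - p) * gchoose (x + y) p := by rw [key, ih]
      _ = ((p : ℝ) + 1) * gchoose (x + y) ((p : ℤ) + 1) := (gchoose_L1' (x + y) (p : ℤ)).symm
      _ = ((p : ℝ) + 1) * gchoose (x + y) (((p + 1 : ℕ)) : ℤ) := by rw [hc]

lemma gchoose_one (x : ℝ) : gchoose x 1 = x := by
  have := gchoose_natCast x 1
  norm_num at this
  simpa using this

lemma gchoose_star (x : ℝ) (m : ℤ) (c : ℝ) :
    ((m : ℝ) + c + 1) * gchoose (x + 1) (m + 1)
      = (x + c - m + 1) * gchoose x m + x * gchoose (x - 1) (m - 1) + c * gchoose x (m + 1) := by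
  linear_combination ((m : ℝ) + c + 1) * gchoose_pascal x m + gchoose_L1' x m - gchoose_L1 x m

/-- coefficient of `t^k` in `L_p^{2a}(2t)` -/
noncomputable def cf (a : ℝ) (p k : ℕ) : ℝ :=
  (-1 : ℝ) ^ k * 2 ^ k / (Nat.factorial k : ℝ) * gchoose ((p : ℝ) + 2 * a) ((p : ℤ) - k)

lemma cf_eq_zero {a : ℝ} {p k : ℕ} (h : p < k) : cf a p k = 0 := by
  unfold cf
  rw [gchoose_of_neg (by omega)]
  ring

lemma cf_star0 {a : ℝ} {p : ℕ} (hp : 1 ≤ p) :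
    ((p : ℝ) + 1) * cf a (p + 1) 0
      = (2 * a + 1) * cf a p 0 + ((p : ℝ) + 2 * a) * cf a (p - 1) 0 := by
  obtain ⟨q, rfl⟩ : ∃ q, p = q + 1 := ⟨p - 1, by omega⟩
  unfold cf
  have e1 : ((q + 1 + 1 : ℕ) : ℝ) + 2 * a = ((q : ℝ) + 1 + 2 * a) + 1 := by push_cast; ring
  have e2 : ((q + 1 + 1 : ℕ) : ℤ) - (0 : ℕ) = ((q : ℤ) + 1 - (0:ℕ)) + 1 := by push_cast; ring
  have e3 : ((q + 1 - 1 : ℕ) : ℝ) + 2 * a = ((q : ℝ) + 1 + 2 * a) - 1 := by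
    simp only [Nat.add_sub_cancel]; push_cast; ring
  have e4 : ((q + 1 - 1 : ℕ) : ℤ) - (0 : ℕ) = ((q : ℤ) + 1 - (0:ℕ)) - 1 := by
    simp only [Nat.add_sub_cancel]; push_cast; ring
  rw [e1, e2, e3, e4]
  have key := gchoose_star ((q : ℝ) + 1 + 2 * a) ((q : ℤ) + 1 - (0:ℕ)) 0
  norm_num at key ⊢
  linarith [key]

lemma cf_star {a : ℝ} {p : ℕ} (hp : 1 ≤ p) (k : ℕ) :
    ((p : ℝ) + 1) * cf a (p + 1) (k + 1)
      = (2 * a + 2 * (k : ℝ) + 3) * cf a p (k + 1)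
        + ((p : ℝ) + 2 * a) * cf a (p - 1) (k + 1) - 2 * cf a p k := by
  obtain ⟨q, rfl⟩ : ∃ q, p = q + 1 := ⟨p - 1, by omega⟩
  unfold cf
  have e1 : ((q + 1 + 1 : ℕ) : ℝ) + 2 * a = ((q : ℝ) + 1 + 2 * a) + 1 := by push_cast; ring
  have e2 : ((q + 1 + 1 : ℕ) : ℤ) - ((k + 1 : ℕ) : ℤ) = ((q : ℤ) - k) + 1 := by push_cast; ring
  have e3 : ((q + 1 - 1 : ℕ) : ℝ) + 2 * a = ((q : ℝ) + 1 + 2 * a) - 1 := by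
    simp only [Nat.add_sub_cancel]; push_cast; ring
  have e4 : ((q + 1 - 1 : ℕ) : ℤ) - ((k + 1 : ℕ) : ℤ) = ((q : ℤ) - k) - 1 := by
    simp only [Nat.add_sub_cancel]; push_cast; ring
  have e5 : ((q + 1 : ℕ) : ℤ) - ((k + 1 : ℕ) : ℤ) = ((q : ℤ) - k) := by push_cast; ring
  have e6 : ((q + 1 : ℕ) : ℤ) - (k : ℕ) = ((q : ℤ) - k) + 1 := by push_cast; ring
  rw [e1, e2, e3, e4, e5, e6]
  have key := gchoose_star ((q : ℝ) + 1 + 2 * a) ((q : ℤ) - k) ((k : ℝ) + 1)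
  have hm : (((q : ℤ) - k : ℤ) : ℝ) = (q : ℝ) - k := by push_cast; ring
  rw [hm] at key
  have hf : (Nat.factorial k : ℝ) ≠ 0 := by positivity
  have hk1 : ((k : ℝ) + 1) ≠ 0 := by positivity
  have key2 : ((q:ℝ)+2) * gchoose ((q:ℝ)+1+2*a+1) ((q:ℤ)-k+1)
      = (2*a+2*(k:ℝ)+3) * gchoose ((q:ℝ)+1+2*a) ((q:ℤ)-k)
        + ((q:ℝ)+1+2*a) * gchoose ((q:ℝ)+1+2*a-1) ((q:ℤ)-k-1)
        + ((k:ℝ)+1) * gchoose ((q:ℝ)+1+2*a) ((q:ℤ)-k+1) := by linear_combination key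
  have hpw2 : ((k:ℝ)+1) * ((-1:ℝ)^(k+1) * 2^(k+1) / ((Nat.factorial (k+1) : ℕ) : ℝ))
      = (-2) * ((-1:ℝ)^k * 2^k / ((Nat.factorial k : ℕ) : ℝ)) := by
    rw [pow_succ, pow_succ, Nat.factorial_succ]
    push_cast
    field_simp
  push_cast
  apply mul_left_cancel₀ hk1
  linear_combination (-2*((-1:ℝ)^k*2^k/((Nat.factorial k : ℕ):ℝ))) * key2
    + (((q:ℝ)+2)*gchoose ((q:ℝ)+1+2*a+1) ((q:ℤ)-k+1)
       - (2*a+2*(k:ℝ)+3)*gchoose ((q:ℝ)+1+2*a) ((q:ℤ)-k)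
       - ((q:ℝ)+1+2*a)*gchoose ((q:ℝ)+1+2*a-1) ((q:ℤ)-k-1)) * hpw2

noncomputable def msum (a : ℝ) (A : ℕ → ℝ) (p : ℕ) : ℝ :=
  ∑ k ∈ Finset.range (p + 1), cf a p k * A k

lemma msum_ext (a : ℝ) (A : ℕ → ℝ) (p N : ℕ) (hN : p + 1 ≤ N) :
    msum a A p = ∑ k ∈ Finset.range N, cf a p k * A k := by
  unfold msum
  refine Finset.sum_subset (Finset.range_subset_range.mpr hN) fun k hk hk2 => ?_
  rw [cf_eq_zero (show p < k by simp only [Finset.mem_range, not_lt] at hk2; omega)]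
  ring

lemma g_prod {a : ℝ} {g : ℕ → ℝ}
    (hg : ∀ k, 1 ≤ k → g (k + 1) = (2 * a + (k : ℝ) + 1) / 2 * g k) :
    ∀ j, g (j + 1) = g 1 * (∏ i ∈ Finset.range j, (2 * a + (i : ℝ) + 2)) / 2 ^ j := by
  intro j
  induction j with
  | zero => simp
  | succ j ih =>
    rw [hg (j + 1) (by omega), ih, Finset.prod_range_succ]
    push_cast
    field_simp
    ring

lemma cf_mul_g {a : ℝ} {g : ℕ → ℝ}
    (hg : ∀ k, 1 ≤ k → g (k + 1) = (2 * a + (k : ℝ) + 1) / 2 * g k) (p : ℕ) :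
    ∑ j ∈ Finset.range (p + 1), cf a p j * g (j + 1) = g 1 * gchoose ((p : ℝ) - 2) p := by
  have hterm : ∀ j ∈ Finset.range (p + 1), cf a p j * g (j + 1)
      = g 1 * (gchoose (-2 * a - 2) (j : ℤ) * gchoose ((p : ℝ) + 2 * a) ((p : ℤ) - j)) := by
    intro j _
    rw [g_prod hg j]
    unfold cf
    rw [gchoose_natCast (-2 * a - 2) j]
    have hpr : ∏ i ∈ Finset.range j, (-2 * a - 2 - (i : ℝ))
        = (-1 : ℝ) ^ j * ∏ i ∈ Finset.range j, (2 * a + (i : ℝ) + 2) := by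
      calc ∏ i ∈ Finset.range j, (-2 * a - 2 - (i : ℝ))
          = ∏ i ∈ Finset.range j, ((-1) * (2 * a + (i : ℝ) + 2)) :=
            Finset.prod_congr rfl (by intros; ring)
        _ = (∏ _i ∈ Finset.range j, (-1 : ℝ)) * ∏ i ∈ Finset.range j, (2 * a + (i : ℝ) + 2) := by
            rw [Finset.prod_mul_distrib]
        _ = (-1 : ℝ) ^ j * ∏ i ∈ Finset.range j, (2 * a + (i : ℝ) + 2) := by
            rw [Finset.prod_const, Finset.card_range]
    rw [hpr]
    have h2j : (2 : ℝ) ^ j ≠ 0 := by positivity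
    have hfj : (Nat.factorial j : ℝ) ≠ 0 := by positivity
    field_simp
  rw [Finset.sum_congr rfl hterm, ← Finset.mul_sum, gchoose_vandermonde]
  have : -2 * a - 2 + ((p : ℝ) + 2 * a) = (p : ℝ) - 2 := by ring
  rw [this]

lemma msum_rec {a : ℝ} {A g : ℕ → ℝ}
    (hA : ∀ k, A (k + 1) = (a + (k : ℝ) + 1) * A k + g (k + 1))
    (hg : ∀ k, 1 ≤ k → g (k + 1) = (2 * a + (k : ℝ) + 1) / 2 * g k)
    {p : ℕ} (hp : 1 ≤ p) :
    ((p : ℝ) + 1) * msum a A (p + 1)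
      = - msum a A p + ((p : ℝ) + 2 * a) * msum a A (p - 1)
        - 2 * g 1 * gchoose ((p : ℝ) - 2) p := by
  have hstep : ((p : ℝ) + 1) * msum a A (p + 1)
      = (∑ j ∈ Finset.range (p + 1), (2 * a + 2 * (j : ℝ) + 3) * (cf a p (j + 1) * A (j + 1)))
        + ((p : ℝ) + 2 * a) * (∑ j ∈ Finset.range (p + 1), cf a (p - 1) (j + 1) * A (j + 1))
        - 2 * (∑ j ∈ Finset.range (p + 1), cf a p j * A (j + 1))
        + ((2 * a + 1) * (cf a p 0 * A 0) + ((p : ℝ) + 2 * a) * (cf a (p - 1) 0 * A 0)) := by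
    calc ((p : ℝ) + 1) * msum a A (p + 1)
        = ∑ k ∈ Finset.range (p + 1 + 1), ((p : ℝ) + 1) * (cf a (p + 1) k * A k) := by
          have hd : msum a A (p + 1) = ∑ k ∈ Finset.range (p + 1 + 1), cf a (p + 1) k * A k := rfl
          rw [hd, Finset.mul_sum]
      _ = (∑ j ∈ Finset.range (p + 1), ((p : ℝ) + 1) * (cf a (p + 1) (j + 1) * A (j + 1)))
          + ((p : ℝ) + 1) * (cf a (p + 1) 0 * A 0) := by rw [Finset.sum_range_succ']
      _ = (∑ j ∈ Finset.range (p + 1),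
            ((2 * a + 2 * (j : ℝ) + 3) * (cf a p (j + 1) * A (j + 1))
              + ((p : ℝ) + 2 * a) * (cf a (p - 1) (j + 1) * A (j + 1))
              - 2 * (cf a p j * A (j + 1))))
          + ((2 * a + 1) * (cf a p 0 * A 0) + ((p : ℝ) + 2 * a) * (cf a (p - 1) 0 * A 0)) := by
          congr 1
          · exact Finset.sum_congr rfl fun j _ => by
              linear_combination A (j + 1) * cf_star (a := a) hp j
          · linear_combination A 0 * cf_star0 (a := a) hp
      _ = _ := by
          rw [Finset.sum_sub_distrib, Finset.sum_add_distrib, ← Finset.mul_sum, ← Finset.mul_sum]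
  have hU1 : (∑ j ∈ Finset.range (p + 1), (2 * a + 2 * (j : ℝ) + 3) * (cf a p (j + 1) * A (j + 1)))
      + (2 * a + 1) * (cf a p 0 * A 0)
      = ∑ k ∈ Finset.range (p + 1), (2 * a + 2 * (k : ℝ) + 1) * (cf a p k * A k) := by
    have h2 : ∑ k ∈ Finset.range (p + 1 + 1), (2 * a + 2 * (k : ℝ) + 1) * (cf a p k * A k)
        = ∑ k ∈ Finset.range (p + 1), (2 * a + 2 * (k : ℝ) + 1) * (cf a p k * A k) := by
      rw [Finset.sum_range_succ, cf_eq_zero (show p < p + 1 by omega)]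
      simp
    have hpeel : ∑ k ∈ Finset.range (p + 1 + 1), (2 * a + 2 * (k : ℝ) + 1) * (cf a p k * A k)
        = (∑ j ∈ Finset.range (p + 1), (2 * a + 2 * (j : ℝ) + 3) * (cf a p (j + 1) * A (j + 1)))
          + (2 * a + 1) * (cf a p 0 * A 0) := by
      rw [Finset.sum_range_succ']
      congr 1
      · exact Finset.sum_congr rfl fun j _ => by push_cast; ring
      · norm_num
    exact hpeel.symm.trans h2
  have hU3 : ∑ j ∈ Finset.range (p + 1), cf a p j * A (j + 1)
      = (∑ j ∈ Finset.range (p + 1), (a + (j : ℝ) + 1) * (cf a p j * A j))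
        + ∑ j ∈ Finset.range (p + 1), cf a p j * g (j + 1) := by
    rw [← Finset.sum_add_distrib]
    exact Finset.sum_congr rfl fun j _ => by rw [hA j]; ring
  have hV : ∑ j ∈ Finset.range (p + 1), cf a p j * g (j + 1)
      = g 1 * gchoose ((p : ℝ) - 2) p := cf_mul_g hg p
  have hU2 : (∑ j ∈ Finset.range (p + 1), cf a (p - 1) (j + 1) * A (j + 1))
      + cf a (p - 1) 0 * A 0 = msum a A (p - 1) := by
    rw [msum_ext a A (p - 1) (p + 1 + 1) (by omega)]
    conv_rhs => rw [Finset.sum_range_succ']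
  have hcomb : (∑ k ∈ Finset.range (p + 1), (2 * a + 2 * (k : ℝ) + 1) * (cf a p k * A k))
      - 2 * (∑ k ∈ Finset.range (p + 1), (a + (k : ℝ) + 1) * (cf a p k * A k))
      = - msum a A p := by
    unfold msum
    rw [Finset.mul_sum, ← Finset.sum_sub_distrib, ← Finset.sum_neg_distrib]
    exact Finset.sum_congr rfl fun k _ => by ring
  rw [hstep]
  linear_combination hU1 + ((p : ℝ) + 2 * a) * hU2 + (-2 : ℝ) * hU3 + (-2 : ℝ) * hV + hcomb

noncomputable def CC (a : ℝ) (l : ℕ) : ℝ := gchoose ((l : ℝ) + a) l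

noncomputable def zz (a : ℝ) (l : ℕ) : ℝ :=
  if l = 0 then 0 else 2 * ∏ i ∈ Finset.range (l - 1), ((2 * a + 2 * (i : ℝ) + 3) / (2 * (i : ℝ) + 3))

lemma CC_zero (a : ℝ) : CC a 0 = 1 := by
  unfold CC
  exact_mod_cast gchoose_zero ((0 : ℝ) + a)

lemma CC_succ (a : ℝ) (l : ℕ) : ((l : ℝ) + 1) * CC a (l + 1) = (a + (l : ℝ) + 1) * CC a l := by
  unfold CC
  rw [gchoose_natCast, gchoose_natCast, Finset.prod_range_succ']
  have h1 : ∀ i ∈ Finset.range l, (((l + 1 : ℕ)) : ℝ) + a - ((i + 1 : ℕ) : ℝ) = ((l : ℕ) : ℝ) + a - i := by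
    intros i _; push_cast; ring
  rw [Finset.prod_congr rfl h1, Nat.factorial_succ]
  have h2 : (Nat.factorial l : ℝ) ≠ 0 := by positivity
  have h3 : ((l : ℝ) + 1) ≠ 0 := by positivity
  push_cast
  field_simp
  ring

lemma zz_zero (a : ℝ) : zz a 0 = 0 := by simp [zz]

lemma zz_one (a : ℝ) : zz a 1 = 2 := by simp [zz]

lemma zz_succ (a : ℝ) {l : ℕ} (hl : 1 ≤ l) :
    (2 * (l : ℝ) + 1) * zz a (l + 1) = (2 * a + 2 * (l : ℝ) + 1) * zz a l := by
  obtain ⟨j, rfl⟩ : ∃ j, l = j + 1 := ⟨l - 1, by omega⟩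
  unfold zz
  rw [if_neg (by omega), if_neg (by omega)]
  simp only [Nat.add_sub_cancel]
  rw [Finset.prod_range_succ]
  have h1 : (2 * (j : ℝ) + 3) ≠ 0 := by positivity
  push_cast
  field_simp
  ring

lemma gchoose_self_sub_two {n : ℕ} (hn : 2 ≤ n) : gchoose ((n : ℝ) - 2) n = 0 := by
  rw [gchoose_natCast]
  rw [Finset.prod_eq_zero (show n - 2 ∈ Finset.range n by simp; omega)]
  · simp
  · have : ((n - 2 : ℕ) : ℝ) = (n : ℝ) - 2 := by push_cast [hn]; ring
    rw [this]; ring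

lemma gchoose_one' (x : ℝ) : gchoose x ((1 : ℕ) : ℤ) = x := by
  exact_mod_cast gchoose_one x

lemma zz_key (a : ℝ) (j : ℕ) :
    (2 * (j : ℝ) + 1) * zz a (j + 1)
      = (2 * a + 2 * (j : ℝ) + 1) * zz a j
        - 2 * gchoose (((2 * j + 1 : ℕ) : ℝ) - 2) ((2 * j + 1 : ℕ) : ℤ) := by
  rcases Nat.eq_zero_or_pos j with hj | hj
  · subst hj
    rw [zz_one, zz_zero]
    rw [show ((2 * 0 + 1 : ℕ) : ℝ) - 2 = -1 by norm_num,
      show ((2 * 0 + 1 : ℕ) : ℤ) = (1 : ℤ) by omega, gchoose_one]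
    norm_num
  · rw [gchoose_self_sub_two (by omega)]
    have h := zz_succ a (l := j) hj
    linarith [h]

lemma msum_closed {a X : ℝ} {A g : ℕ → ℝ} (hA0 : A 0 = X)
    (hA : ∀ k, A (k + 1) = (a + (k : ℝ) + 1) * A k + g (k + 1))
    (hg : ∀ k, 1 ≤ k → g (k + 1) = (2 * a + (k : ℝ) + 1) / 2 * g k) :
    ∀ j : ℕ, msum a A (2 * j) = CC a j * X + zz a j * g 1
      ∧ msum a A (2 * j + 1) = -(CC a j * X + zz a (j + 1) * g 1) := by
  intro j
  induction j with
  | zero =>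
    constructor
    · have h0 : msum a A (2 * 0) = cf a 0 0 * A 0 := by
        show (∑ k ∈ Finset.range (2 * 0 + 1), cf a (2 * 0) k * A k) = _
        norm_num
      rw [h0, hA0, CC_zero, zz_zero]
      unfold cf
      norm_num [gchoose_zero]
    · have h1 : msum a A (2 * 0 + 1) = cf a 1 0 * A 0 + cf a 1 1 * A 1 := by
        show (∑ k ∈ Finset.range (2 * 0 + 1 + 1), cf a (2 * 0 + 1) k * A k) = _
        norm_num [Finset.sum_range_succ]
      have hc0 : cf a 1 0 = 1 + 2 * a := by
        unfold cf
        norm_num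
        exact gchoose_one _
      have hc1 : cf a 1 1 = -2 := by
        unfold cf
        rw [show ((1 : ℕ) : ℤ) - ((1 : ℕ) : ℤ) = (0 : ℤ) by omega, gchoose_zero]
        norm_num
      have hA1 : A 1 = (a + 1) * X + g 1 := by
        have h := hA 0
        rw [hA0] at h
        push_cast at h
        linarith [h]
      rw [h1, hc0, hc1, hA0, hA1, CC_zero, zz_one]
      ring
  | succ j ih =>
    obtain ⟨h1, h2⟩ := ih
    have key1 := msum_rec hA hg (p := 2 * j + 1) (by omega)
    have key2 := msum_rec hA hg (p := 2 * j + 1 + 1) (by omega)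
    have e1 : 2 * j + 1 + 1 = 2 * (j + 1) := by omega
    have e2 : 2 * j + 1 - 1 = 2 * j := by omega
    have e3 : 2 * j + 1 + 1 - 1 = 2 * j + 1 := by omega
    have e4 : 2 * j + 1 + 1 + 1 = 2 * (j + 1) + 1 := by omega
    rw [e1, e2] at key1
    rw [e4, e3, e1] at key2
    have hCC := CC_succ a j
    have hzk := zz_key a j
    have hfst : msum a A (2 * (j + 1)) = CC a (j + 1) * X + zz a (j + 1) * g 1 := by
      have hne : ((2 * j + 1 : ℕ) : ℝ) + 1 ≠ 0 := by positivity
      apply mul_left_cancel₀ hne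
      rw [key1, h1, h2]
      push_cast at hCC hzk ⊢
      linear_combination (-2 * X) * hCC + (-(g 1)) * hzk
    refine ⟨hfst, ?_⟩
    have hgc2 : gchoose (((2 * (j + 1) : ℕ) : ℝ) - 2) ((2 * (j + 1) : ℕ) : ℤ) = 0 :=
      gchoose_self_sub_two (by omega)
    have hne : ((2 * (j + 1) : ℕ) : ℝ) + 1 ≠ 0 := by positivity
    apply mul_left_cancel₀ hne
    rw [key2, hfst, h2, hgc2]
    have hzs2 := zz_succ a (l := j + 1) (by omega)
    push_cast at hCC hzs2 ⊢
    linear_combination (2 * X) * hCC + (g 1) * hzs2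

lemma msum_total {a X : ℝ} {A g : ℕ → ℝ} (hA0 : A 0 = X)
    (hA : ∀ k, A (k + 1) = (a + (k : ℝ) + 1) * A k + g (k + 1))
    (hg : ∀ k, 1 ≤ k → g (k + 1) = (2 * a + (k : ℝ) + 1) / 2 * g k) (l : ℕ) :
    ∑ p ∈ Finset.range (2 * l + 1), msum a A p = CC a l * X := by
  induction l with
  | zero =>
    rw [show 2 * 0 + 1 = 1 by omega, Finset.sum_range_one]
    exact ((msum_closed hA0 hA hg 0).1).trans (by rw [zz_zero]; ring)
  | succ l ih =>
    have hr : 2 * (l + 1) + 1 = (2 * l + 1) + 1 + 1 := by omega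
    rw [hr, Finset.sum_range_succ, Finset.sum_range_succ, ih]
    have hm1 := (msum_closed hA0 hA hg l).2
    have hm2 := (msum_closed hA0 hA hg (l + 1)).1
    rw [show (2 * l + 1) + 1 = 2 * (l + 1) by omega, hm2, hm1]
    ring

/-- lower incomplete gamma `γ(a+1,t)` -/
noncomputable def ig (a : ℝ) (t : ℝ) : ℝ := ∫ x in (0:ℝ)..t, Real.exp (-x) * x ^ a

section Analysis
variable {a : ℝ}

lemma intOn_exp_rpow {c : ℝ} (hc : -1 < c) :
    IntegrableOn (fun x => Real.exp (-x) * x ^ c) (Ioi (0:ℝ)) := by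
  have := Real.GammaIntegral_convergent (show (0:ℝ) < c + 1 by linarith)
  simpa using this

lemma ivInt_exp_rpow {c t : ℝ} (ht : 0 ≤ t) (hc : -1 < c) :
    IntervalIntegrable (fun x => Real.exp (-x) * x ^ c) volume 0 t := by
  rw [intervalIntegrable_iff_integrableOn_Ioc_of_le ht]
  exact (intOn_exp_rpow hc).mono_set Ioc_subset_Ioi_self

lemma ig_hasDeriv (ha : -1 < a) {t : ℝ} (ht : 0 < t) :
    HasDerivAt (ig a) (Real.exp (-t) * t ^ a) t := by
  apply intervalIntegral.integral_hasDerivAt_right (ivInt_exp_rpow ht.le ha)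
  · have hopen : IsOpen (Ioi (0:ℝ)) := isOpen_Ioi
    have hcont : ContinuousOn (fun x => Real.exp (-x) * x ^ a) (Ioi 0) := by
      intro x hx
      exact ((Real.continuous_exp.comp continuous_neg).continuousAt.mul
        (Real.continuousAt_rpow_const x a (Or.inl (ne_of_gt hx)))).continuousWithinAt
    exact hcont.stronglyMeasurableAtFilter hopen t ht
  · exact (Real.continuous_exp.comp continuous_neg).continuousAt.mul
      (Real.continuousAt_rpow_const t a (Or.inl (ne_of_gt ht)))

lemma ig_zero : ig a 0 = 0 := intervalIntegral.integral_same

lemma ig_cwa0 (ha : -1 < a) : ContinuousWithinAt (ig a) (Ici 0) 0 := by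
  have h : ContinuousOn (ig a) (Set.uIcc (0:ℝ) 1) :=
    intervalIntegral.continuousOn_primitive_interval'
      (ivInt_exp_rpow zero_le_one ha) left_mem_uIcc
  have h0 : ContinuousWithinAt (ig a) (Set.uIcc (0:ℝ) 1) 0 := h 0 left_mem_uIcc
  apply h0.mono_of_mem_nhdsWithin
  rw [Set.uIcc_of_le (zero_le_one)]
  exact Icc_mem_nhdsGE zero_lt_one

lemma ig_contOn (ha : -1 < a) : ContinuousOn (ig a) (Ici 0) := by
  intro t htt
  rcases eq_or_lt_of_le (Set.mem_Ici.mp htt) with h0 | h0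
  · rw [← h0]; exact ig_cwa0 ha
  · exact ((ig_hasDeriv ha h0).continuousAt).continuousWithinAt

lemma ig_nonneg {t : ℝ} (ht : 0 ≤ t) : 0 ≤ ig a t := by
  apply intervalIntegral.integral_nonneg ht
  intro x hx
  have : (0:ℝ) ≤ x := hx.1
  positivity

lemma ig_le (ha : -1 < a) {t : ℝ} (ht : 0 ≤ t) : ig a t ≤ Real.Gamma (a + 1) := by
  rw [Real.Gamma_eq_integral (show (0:ℝ) < a + 1 by linarith), ig,
    intervalIntegral.integral_of_le ht]
  have h1 : IntegrableOn (fun x => Real.exp (-x) * x ^ (a + 1 - 1)) (Ioi (0:ℝ)) :=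
    Real.GammaIntegral_convergent (by linarith)
  have h2 : ∀ s, (∫ x in s, Real.exp (-x) * x ^ a) = ∫ x in s, Real.exp (-x) * x ^ (a + 1 - 1) := by
    intro s; norm_num
  simp only [h2]
  apply setIntegral_mono_set h1
  · filter_upwards [self_mem_ae_restrict (measurableSet_Ioi : MeasurableSet (Ioi (0:ℝ)))] with x hx
    have : (0:ℝ) < x := hx
    positivity
  · exact HasSubset.Subset.eventuallyLE Ioc_subset_Ioi_self

lemma ig_tendsto (ha : -1 < a) : Tendsto (ig a) atTop (𝓝 (Real.Gamma (a + 1))) := by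
  have h := intervalIntegral_tendsto_integral_Ioi 0 (intOn_exp_rpow ha) tendsto_id
  rw [Real.Gamma_eq_integral (show (0:ℝ) < a + 1 by linarith)]
  have h2 : (∫ x in Ioi (0:ℝ), Real.exp (-x) * x ^ a)
      = ∫ x in Ioi (0:ℝ), Real.exp (-x) * x ^ (a + 1 - 1) := by norm_num
  rw [← h2]
  exact h

lemma contOn_kernel (c : ℝ) : ContinuousOn (fun t => Real.exp (-t) * t ^ c) (Ioi (0:ℝ)) := by
  intro x hx
  exact ((Real.continuous_exp.comp continuous_neg).continuousAt.mul
    (Real.continuousAt_rpow_const x c (Or.inl (ne_of_gt hx)))).continuousWithinAt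

lemma int_kernel_ig (ha : -1 < a) {c : ℝ} (hc : -1 < c) :
    IntegrableOn (fun t => Real.exp (-t) * t ^ c * ig a t) (Ioi (0:ℝ)) := by
  have hb : IntegrableOn (fun t => Real.Gamma (a+1) * (Real.exp (-t) * t ^ c)) (Ioi (0:ℝ)) :=
    (intOn_exp_rpow hc).const_mul _
  apply Integrable.mono' hb
  · exact ((contOn_kernel c).mul
      ((ig_contOn ha).mono (Ioi_subset_Ici le_rfl))).aestronglyMeasurable measurableSet_Ioi
  · filter_upwards [self_mem_ae_restrict (measurableSet_Ioi : MeasurableSet (Ioi (0:ℝ)))] with t htt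
    have h0 : (0:ℝ) < t := htt
    have h1 : 0 ≤ ig a t := ig_nonneg h0.le
    have h2 : ig a t ≤ Real.Gamma (a+1) := ig_le ha h0.le
    have h3 : (0:ℝ) ≤ Real.exp (-t) * t ^ c := by positivity
    rw [Real.norm_eq_abs, abs_of_nonneg (mul_nonneg h3 h1)]
    calc Real.exp (-t) * t ^ c * ig a t ≤ Real.exp (-t) * t ^ c * Real.Gamma (a+1) :=
          mul_le_mul_of_nonneg_left h2 h3
      _ = Real.Gamma (a+1) * (Real.exp (-t) * t ^ c) := by ring

lemma intOn_exp2 {c : ℝ} (hc : -1 < c) :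
    IntegrableOn (fun t => Real.exp (-2*t) * t ^ c) (Ioi (0:ℝ)) := by
  apply Integrable.mono' (intOn_exp_rpow hc)
  · have hc2 : Continuous fun t : ℝ => Real.exp (-2*t) := by
      have : Continuous fun t : ℝ => -2*t := by continuity
      exact Real.continuous_exp.comp this
    have : ContinuousOn (fun t => Real.exp (-2*t) * t ^ c) (Ioi (0:ℝ)) := by
      intro x hx
      exact (hc2.continuousAt.mul
        (Real.continuousAt_rpow_const x c (Or.inl (ne_of_gt hx)))).continuousWithinAt
    exact this.aestronglyMeasurable measurableSet_Ioi
  · filter_upwards [self_mem_ae_restrict (measurableSet_Ioi : MeasurableSet (Ioi (0:ℝ)))] with t htt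
    have h0 : (0:ℝ) < t := htt
    have h4 : Real.exp (-2*t) ≤ Real.exp (-t) := by
      apply Real.exp_le_exp.mpr; linarith
    have h5 : (0:ℝ) ≤ t ^ c := Real.rpow_nonneg h0.le c
    rw [Real.norm_eq_abs, abs_of_nonneg (by positivity)]
    exact mul_le_mul_of_nonneg_right h4 h5

lemma int_exp2_val {s : ℝ} (hs : 0 < s) :
    ∫ t in Ioi (0:ℝ), Real.exp (-2*t) * t ^ (s-1) = Real.Gamma s / 2 ^ s := by
  have h := integral_comp_mul_left_Ioi (fun x => Real.exp (-x) * x ^ (s-1)) 0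
    (show (0:ℝ) < 2 by norm_num)
  simp only [mul_zero] at h
  have hL : ∫ x in Ioi (0:ℝ), Real.exp (-(2*x)) * (2*x) ^ (s-1)
      = ∫ x in Ioi (0:ℝ), (2:ℝ) ^ (s-1) * (Real.exp (-(2*x)) * x ^ (s-1)) := by
    apply setIntegral_congr_fun measurableSet_Ioi
    intro x hx
    show Real.exp (-(2*x)) * (2*x) ^ (s-1) = (2:ℝ) ^ (s-1) * (Real.exp (-(2*x)) * x ^ (s-1))
    rw [Real.mul_rpow (by norm_num : (0:ℝ) ≤ 2) (le_of_lt hx)]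
    ring
  rw [hL, integral_const_mul] at h
  have hG : (∫ x in Ioi (0:ℝ), Real.exp (-x) * x ^ (s-1)) = Real.Gamma s :=
    (Real.Gamma_eq_integral hs).symm
  rw [hG, smul_eq_mul] at h
  have hcongr : (∫ x in Ioi (0:ℝ), Real.exp (-(2*x)) * x ^ (s-1))
      = ∫ t in Ioi (0:ℝ), Real.exp (-2*t) * t ^ (s-1) := by
    apply setIntegral_congr_fun measurableSet_Ioi
    intro x _
    show Real.exp (-(2*x)) * x ^ (s-1) = Real.exp (-2*x) * x ^ (s-1)
    norm_num
  rw [hcongr] at h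
  have h2s : (2:ℝ) ^ s ≠ 0 := by positivity
  have h2s1 : (2:ℝ) ^ (s-1) ≠ 0 := by positivity
  have hrw : (2:ℝ) ^ (s-1) = 2 ^ s / 2 := by
    rw [Real.rpow_sub (by norm_num : (0:ℝ) < 2)]
    norm_num
  rw [hrw] at h
  field_simp at h ⊢
  linarith [h]

noncomputable def Aseq (a : ℝ) (k : ℕ) : ℝ :=
  ∫ t in Ioi (0:ℝ), Real.exp (-t) * t ^ (a + k) * ig a t

lemma Aseq_zero (ha : -1 < a) : Aseq a 0 = Real.Gamma (a+1) ^ 2 / 2 := by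
  have key := integral_Ioi_of_hasDerivAt_of_tendsto
    (f := fun t => ig a t ^ 2 / 2) (a := 0)
    (f' := fun t => Real.exp (-t) * t ^ (a + (0:ℕ)) * ig a t)
    (m := Real.Gamma (a+1) ^ 2 / 2)
    (((ig_cwa0 ha).pow 2).div_const 2)
    (fun x hx => by
      have h := ((ig_hasDeriv ha hx).pow 2).div_const 2
      refine h.congr_deriv ?_
      push_cast
      norm_num
      ring)
    (by
      have := int_kernel_ig ha (show -1 < a + ((0:ℕ):ℝ) by push_cast; linarith)
      exact this)
    (((ig_tendsto ha).pow 2).div_const 2)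
  have key2 : Aseq a 0 = Real.Gamma (a+1) ^ 2 / 2 - ig a 0 ^ 2 / 2 := key
  rw [key2, ig_zero]
  norm_num

lemma Aseq_rec (ha : -1 < a) (k : ℕ) :
    Aseq a (k+1) = (a + (k:ℝ) + 1) * Aseq a k
      + Real.Gamma (2*a + (k:ℝ) + 2) / 2 ^ (2*a + (k:ℝ) + 2) := by
  set c : ℝ := a + (k:ℝ) + 1 with hc
  have hk0 : (0:ℝ) ≤ (k:ℝ) := Nat.cast_nonneg k
  have hcpos : 0 < c := by rw [hc]; linarith
  have hgpos : 0 < c + a + 1 := by rw [hc]; push_cast; linarith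
  have hder : ∀ x ∈ Ioi (0:ℝ), HasDerivAt (fun t => -(Real.exp (-t) * t ^ c * ig a t))
      (Real.exp (-x) * x ^ c * ig a x - c * (Real.exp (-x) * x ^ (c-1) * ig a x)
        - Real.exp (-2*x) * x ^ (c + a)) x := by
    intro x hx
    have hx0 : (0:ℝ) < x := hx
    have h1 : HasDerivAt (fun s : ℝ => Real.exp (-s)) (-Real.exp (-x)) x := by
      simpa using (hasDerivAt_neg x).exp
    have h2 : HasDerivAt (fun s : ℝ => s ^ c) (c * x ^ (c-1)) x :=
      Real.hasDerivAt_rpow_const (Or.inl hx0.ne')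
    have h3 := ig_hasDeriv ha hx0
    have h := ((h1.mul h2).mul h3).neg
    refine h.congr_deriv ?_
    have e1 : Real.exp (-x) * Real.exp (-x) = Real.exp (-2*x) := by
      rw [← Real.exp_add]; ring_nf
    have e2 : x ^ (c + a) = x ^ c * x ^ a := Real.rpow_add hx0 c a
    rw [e2, ← e1]
    simp only [Pi.mul_apply]
    ring
  have hcont0 : ContinuousWithinAt (fun t => -(Real.exp (-t) * t ^ c * ig a t)) (Ici 0) 0 := by
    refine (((Real.continuous_exp.comp continuous_neg).continuousWithinAt.mul
      ?_).mul (ig_cwa0 ha)).neg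
    exact (Real.continuousAt_rpow_const 0 c (Or.inr hcpos.le)).continuousWithinAt
  have hlim : Tendsto (fun t => -(Real.exp (-t) * t ^ c * ig a t)) atTop (𝓝 0) := by
    have hbound : ∀ᶠ t in atTop, ‖-(Real.exp (-t) * t ^ c * ig a t)‖
        ≤ Real.Gamma (a+1) * (t ^ c * Real.exp (-1 * t)) := by
      filter_upwards [Ioi_mem_atTop (0:ℝ)] with t htt
      have h0 : (0:ℝ) < t := htt
      have h1 : 0 ≤ ig a t := ig_nonneg h0.le
      have h2 : ig a t ≤ Real.Gamma (a+1) := ig_le ha h0.le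
      have h3 : (0:ℝ) ≤ Real.exp (-t) * t ^ c := by positivity
      rw [norm_neg, Real.norm_eq_abs, abs_of_nonneg (mul_nonneg h3 h1)]
      calc Real.exp (-t) * t ^ c * ig a t ≤ Real.exp (-t) * t ^ c * Real.Gamma (a+1) :=
            mul_le_mul_of_nonneg_left h2 h3
        _ = Real.Gamma (a+1) * (t ^ c * Real.exp (-1 * t)) := by rw [neg_one_mul]; ring
    have htend : Tendsto (fun t : ℝ => Real.Gamma (a+1) * (t ^ c * Real.exp (-1 * t)))
        atTop (𝓝 0) := by
      have := (tendsto_rpow_mul_exp_neg_mul_atTop_nhds_zero c 1 one_pos).const_mul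
        (Real.Gamma (a+1))
      simpa using this
    exact squeeze_zero_norm' hbound htend
  have hint1 : IntegrableOn (fun t => Real.exp (-t) * t ^ c * ig a t) (Ioi (0:ℝ)) :=
    int_kernel_ig ha (show -1 < c by linarith)
  have hint2 : IntegrableOn (fun t => c * (Real.exp (-t) * t ^ (c-1) * ig a t)) (Ioi (0:ℝ)) :=
    (int_kernel_ig ha (show -1 < c - 1 by rw [hc]; push_cast; linarith)).const_mul c
  have hint3 : IntegrableOn (fun t => Real.exp (-2*t) * t ^ (c + a)) (Ioi (0:ℝ)) :=
    intOn_exp2 (show -1 < c + a by rw [hc]; push_cast; linarith)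
  have hGint : IntegrableOn (fun x => Real.exp (-x) * x ^ c * ig a x
      - c * (Real.exp (-x) * x ^ (c-1) * ig a x) - Real.exp (-2*x) * x ^ (c + a)) (Ioi (0:ℝ)) :=
    (hint1.sub hint2).sub hint3
  have key := integral_Ioi_of_hasDerivAt_of_tendsto hcont0 hder hGint hlim
  have hF0 : -(Real.exp (-(0:ℝ)) * (0:ℝ) ^ c * ig a 0) = 0 := by
    rw [ig_zero]; ring
  rw [hF0, sub_zero] at key
  have hint12 : IntegrableOn (fun t => Real.exp (-t) * t ^ c * ig a t
      - c * (Real.exp (-t) * t ^ (c-1) * ig a t)) (Ioi (0:ℝ)) := hint1.sub hint2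
  rw [integral_sub hint12 hint3, integral_sub hint1 hint2, integral_const_mul] at key
  have hval : ∫ t in Ioi (0:ℝ), Real.exp (-2*t) * t ^ (c + a)
      = Real.Gamma (c + a + 1) / 2 ^ (c + a + 1) := by
    have := int_exp2_val hgpos
    simpa using this
  rw [hval] at key
  have hA1 : Aseq a (k+1) = ∫ t in Ioi (0:ℝ), Real.exp (-t) * t ^ c * ig a t := by
    unfold Aseq
    apply setIntegral_congr_fun measurableSet_Ioi
    intro x _
    have : a + ((k+1:ℕ):ℝ) = c := by rw [hc]; push_cast; ring
    rw [this]
  have hA2 : Aseq a k = ∫ t in Ioi (0:ℝ), Real.exp (-t) * t ^ (c-1) * ig a t := by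
    unfold Aseq
    apply setIntegral_congr_fun measurableSet_Ioi
    intro x _
    have : a + ((k:ℕ):ℝ) = c - 1 := by rw [hc]; push_cast; ring
    rw [this]
  have hexp : c + a + 1 = 2*a + (k:ℝ) + 2 := by rw [hc]; ring
  rw [hA1, hA2, ← hexp]
  linarith [key]

noncomputable def gseq (a : ℝ) (j : ℕ) : ℝ :=
  Real.Gamma (2*a + (j:ℝ) + 1) / 2 ^ (2*a + (j:ℝ) + 1)

lemma gseq_rec (ha : -1 < a) :
    ∀ k, 1 ≤ k → gseq a (k+1) = (2*a + (k:ℝ) + 1)/2 * gseq a k := by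
  intro k hk
  unfold gseq
  have hk1 : (1:ℝ) ≤ (k:ℝ) := by exact_mod_cast hk
  have hpos : (0:ℝ) < 2*a + (k:ℝ) + 1 := by linarith
  have hgam : Real.Gamma (2*a + ((k+1:ℕ):ℝ) + 1)
      = (2*a + (k:ℝ) + 1) * Real.Gamma (2*a + (k:ℝ) + 1) := by
    rw [show 2*a + ((k+1:ℕ):ℝ) + 1 = (2*a + (k:ℝ) + 1) + 1 by push_cast; ring]
    exact Real.Gamma_add_one (ne_of_gt hpos)
  have hpow : (2:ℝ) ^ (2*a + ((k+1:ℕ):ℝ) + 1) = 2 ^ (2*a + (k:ℝ) + 1) * 2 := by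
    rw [show 2*a + ((k+1:ℕ):ℝ) + 1 = (2*a + (k:ℝ) + 1) + 1 by push_cast; ring,
      Real.rpow_add (by norm_num : (0:ℝ) < 2), Real.rpow_one]
  rw [hgam, hpow]
  have h2 : (2:ℝ) ^ (2*a + (k:ℝ) + 1) ≠ 0 := by positivity
  field_simp

lemma Aseq_rec' (ha : -1 < a) :
    ∀ k, Aseq a (k+1) = (a + (k:ℝ) + 1) * Aseq a k + gseq a (k+1) := by
  intro k
  rw [Aseq_rec ha k]
  unfold gseq
  rw [show 2*a + ((k+1:ℕ):ℝ) + 1 = 2*a + (k:ℝ) + 2 by push_cast; ring]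

theorem incomplete_gamma_F_integral (a : ℝ) (ha : -1 < a) (l : ℕ) :
    ∫ w in Set.Ioi (0 : ℝ), Real.exp (-w / 2) * w ^ a *
        (∫ x in (0 : ℝ)..(w / 2), Real.exp (-x) * x ^ ((a + 1) - 1)) *
        ∑ p ∈ Finset.range (2 * l + 1), lagL p (2 * a) w
      = (2 : ℝ) ^ a * gchoose ((l : ℝ) + a) (l : ℤ) * (Real.Gamma (a + 1)) ^ 2 := by
  have hstep0 : (∫ w in Ioi (0:ℝ), Real.exp (-w / 2) * w ^ a *
        (∫ x in (0:ℝ)..(w / 2), Real.exp (-x) * x ^ ((a + 1) - 1)) *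
        ∑ p ∈ Finset.range (2 * l + 1), lagL p (2 * a) w)
      = ∫ w in Ioi (0:ℝ), Real.exp (-w / 2) * w ^ a * ig a (w / 2) *
          ∑ p ∈ Finset.range (2 * l + 1), lagL p (2 * a) w := by
    simp only [add_sub_cancel_right]
    rfl
  rw [hstep0]
  have h := integral_comp_mul_left_Ioi (fun w => Real.exp (-w / 2) * w ^ a * ig a (w / 2) *
      ∑ p ∈ Finset.range (2 * l + 1), lagL p (2 * a) w) 0 (show (0:ℝ) < 2 by norm_num)
  simp only [mul_zero, smul_eq_mul] at h
  have h2 : (∫ x in Ioi (0:ℝ), Real.exp (-(2*x) / 2) * (2*x) ^ a * ig a ((2*x) / 2) *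
      ∑ p ∈ Finset.range (2 * l + 1), lagL p (2 * a) (2*x))
      = 2⁻¹ * ∫ w in Ioi (0:ℝ), Real.exp (-w / 2) * w ^ a * ig a (w / 2) *
          ∑ p ∈ Finset.range (2 * l + 1), lagL p (2 * a) w := h
  have hexp : (∫ x in Ioi (0:ℝ), Real.exp (-(2*x) / 2) * (2*x) ^ a * ig a ((2*x) / 2) *
      ∑ p ∈ Finset.range (2 * l + 1), lagL p (2 * a) (2*x))
      = ∫ x in Ioi (0:ℝ), ∑ p ∈ Finset.range (2*l+1), ∑ k ∈ Finset.range (p+1),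
          (2:ℝ)^a * cf a p k * (Real.exp (-x) * x ^ (a + (k:ℕ)) * ig a x) := by
    apply setIntegral_congr_fun measurableSet_Ioi
    intro t htt
    have ht : (0:ℝ) < t := htt
    show Real.exp (-(2*t) / 2) * (2*t) ^ a * ig a ((2*t) / 2) *
        (∑ p ∈ Finset.range (2 * l + 1), lagL p (2 * a) (2*t)) = _
    have e0 : -(2*t)/2 = -t := by ring
    have e05 : (2*t)/2 = t := by ring
    have e1 : (2*t) ^ a = 2^a * t^a := Real.mul_rpow (by norm_num) ht.le
    rw [e0, e05, e1, Finset.mul_sum]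
    apply Finset.sum_congr rfl
    intro p _
    unfold lagL
    rw [Finset.mul_sum]
    apply Finset.sum_congr rfl
    intro k _
    unfold cf
    rw [mul_pow]
    rw [show t ^ (k:ℕ) = t ^ ((k:ℕ):ℝ) from (Real.rpow_natCast t k).symm,
      show t ^ (a + (k:ℕ)) = t^a * t^((k:ℕ):ℝ) from Real.rpow_add ht a _]
    have hfk : (Nat.factorial k : ℝ) ≠ 0 := by positivity
    field_simp
  have hint_term : ∀ (p k : ℕ), IntegrableOn (fun x => (2:ℝ)^a * cf a p k *
      (Real.exp (-x) * x ^ (a + (k:ℕ)) * ig a x)) (Ioi (0:ℝ)) := by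
    intro p k
    have hk0 : (0:ℝ) ≤ (k:ℝ) := Nat.cast_nonneg k
    exact (int_kernel_ig ha (show -1 < a + (k:ℕ) by linarith)).const_mul _
  have hswap : (∫ x in Ioi (0:ℝ), ∑ p ∈ Finset.range (2*l+1), ∑ k ∈ Finset.range (p+1),
      (2:ℝ)^a * cf a p k * (Real.exp (-x) * x ^ (a + (k:ℕ)) * ig a x))
      = ∑ p ∈ Finset.range (2*l+1), ∑ k ∈ Finset.range (p+1),
          (2:ℝ)^a * cf a p k * Aseq a k := by
    rw [integral_finset_sum _ (fun p _ => integrable_finset_sum _ (fun k _ => hint_term p k))]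
    apply Finset.sum_congr rfl; intro p _
    rw [integral_finset_sum _ (fun k _ => hint_term p k)]
    apply Finset.sum_congr rfl; intro k _
    rw [integral_const_mul]
    rfl
  have halg : (∑ p ∈ Finset.range (2*l+1), ∑ k ∈ Finset.range (p+1),
      (2:ℝ)^a * cf a p k * Aseq a k)
      = 2^a * (CC a l * (Real.Gamma (a+1)^2/2)) := by
    have h1 : ∀ p, (∑ k ∈ Finset.range (p+1), (2:ℝ)^a * cf a p k * Aseq a k)
        = 2^a * msum a (Aseq a) p := by
      intro p
      unfold msum
      rw [Finset.mul_sum]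
      exact Finset.sum_congr rfl fun k _ => by ring
    rw [Finset.sum_congr rfl (fun p _ => h1 p), ← Finset.mul_sum,
      msum_total (Aseq_zero ha) (Aseq_rec' ha) (gseq_rec ha) l]
  have hfin : (∫ w in Ioi (0:ℝ), Real.exp (-w / 2) * w ^ a * ig a (w / 2) *
      ∑ p ∈ Finset.range (2 * l + 1), lagL p (2 * a) w)
      = 2 * (2^a * (CC a l * (Real.Gamma (a+1)^2/2))) := by
    rw [← halg, ← hswap, ← hexp]
    rw [h2]
    ring
  rw [hfin]
  unfold CC
  ring

end Analysis
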